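/- For every element W_q of the canonical partition of I_NS(T) of an admissible tuple T = (G₁,G₁',G₂,G₂'), there is a right vertex j ∈ [n] having at least two neighbors in W_q in each of the simple graphs G₁ and G₂. -/

import Mathlib

open Finset

/-- A bipartite multigraph on `[n] ⊔ [m]` encoded by its adjacency (multiplicity) matrix. -/
def IsReg (n d : ℕ) (A : Fin n → Fin n → ℕ) : Prop :=
  (∀ i, ∑ j, A i j = d) ∧ (∀ j, ∑ i, A i j = d)

/-- A multigraph is simple if all multiplicities are at most one. -/
def IsSimpleG {n m : ℕ} (A : Fin n → Fin m → ℕ) : Prop := ∀ i j, A i j ≤ 1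

/-- The simple switching `⟨i,i',j,j'⟩`: replace the edges `(i,j)` and `(i',j')` by
`(i,j')` and `(i',j)`. -/
def switchM {n m : ℕ} (A : Fin n → Fin m → ℕ) (i i' : Fin n) (j j' : Fin m) :
    Fin n → Fin m → ℕ :=
  fun a b =>
    if a = i ∧ b = j then A a b - 1
    else if a = i' ∧ b = j' then A a b - 1
    else if a = i ∧ b = j' then A a b + 1
    else if a = i' ∧ b = j then A a b + 1
    else A a b

/-- Two multigraphs are adjacent if one is obtained from the other by a simple switching
operated on two non-incident edges. -/
def AdjacentM {n : ℕ} (A B : Fin n → Fin n → ℕ) : Prop :=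
  ∃ i i' j j', i ≠ i' ∧ j ≠ j' ∧ 0 < A i j ∧ 0 < A i' j' ∧ B = switchM A i i' j j'

/-- `Cat_{n,d}(k)`: `d`-regular bipartite multigraphs with exactly `k` multiplicity-2 edges,
no two of them incident, and no multiplicities `≥ 3`. -/
def InCat (n d k : ℕ) (A : Fin n → Fin n → ℕ) : Prop :=
  IsReg n d A ∧ (∀ i j, A i j ≤ 2) ∧
    (Finset.univ.filter fun p : Fin n × Fin n => A p.1 p.2 = 2).card = k ∧
    (∀ i j j', A i j = 2 → A i j' = 2 → j = j') ∧
    (∀ i i' j, A i j = 2 → A i' j = 2 → i = i')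

/-- The set of multiedges (multiplicity-2 edges) of a multigraph. -/
def MEs {n : ℕ} (A : Fin n → Fin n → ℕ) : Finset (Fin n × Fin n) :=
  Finset.univ.filter fun p => A p.1 p.2 = 2

/-- The data of a simple path starting at a multigraph `A ∈ Cat_{n,d}(k)`: to each
multiedge `e = (i_s, j_s)` of `A` it assigns the auxiliary edge `f e = (i'_s, j'_s)` used by
the corresponding simple switching `⟨i_s, i'_s, j_s, j'_s⟩`.  The auxiliary left (resp. right)
vertices are pairwise distinct, avoid all multiedge left (resp. right) vertices, and the
switching creates no multiple edges. -/
def SimplePathData {n : ℕ} (A : Fin n → Fin n → ℕ)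
    (f : Fin n × Fin n → Fin n × Fin n) : Prop :=
  (∀ e ∈ MEs A, 0 < A (f e).1 (f e).2 ∧ A (f e).1 e.2 = 0 ∧ A e.1 (f e).2 = 0 ∧
    ∀ e' ∈ MEs A, (f e).1 ≠ e'.1 ∧ (f e).2 ≠ e'.2) ∧
  ∀ e ∈ MEs A, ∀ e' ∈ MEs A, e ≠ e' → (f e).1 ≠ (f e').1 ∧ (f e).2 ≠ (f e').2

/-- The endpoint of the simple path with data `f` starting at `A`: each multiedge
`(i_s,j_s)` loses one parallel edge, the auxiliary edge `(i'_s,j'_s)` is removed, and the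
edges `(i_s,j'_s)` and `(i'_s,j_s)` are added. -/
def endpointM {n : ℕ} (A : Fin n → Fin n → ℕ) (f : Fin n × Fin n → Fin n × Fin n) :
    Fin n → Fin n → ℕ :=
  fun a b =>
    A a b + ((MEs A).filter fun e => (a = e.1 ∧ b = (f e).2) ∨ (a = (f e).1 ∧ b = e.2)).card
      - ((MEs A).filter fun e => (a = e.1 ∧ b = e.2) ∨ (a = (f e).1 ∧ b = (f e).2)).card

/-- The `s`-neighborhood of a multigraph: all endpoints of simple paths starting at it. -/
def SN {n : ℕ} (A : Fin n → Fin n → ℕ) : Set (Fin n → Fin n → ℕ) :=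
  {B | ∃ f, SimplePathData A f ∧ B = endpointM A f}

/-- The anti-expansion measure `Z(G)` of a simple graph. -/
def Zae {n : ℕ} (A : Fin n → Fin n → ℕ) : ℕ :=
  (Finset.univ.filter fun p : Fin n × Fin n =>
    0 < A p.1 p.2 ∧ ∃ k, k ≠ p.1 ∧ 0 < A k p.2 ∧
      2 ≤ (Finset.univ.filter fun j => 0 < A p.1 j ∧ 0 < A k j).card).card

/-- The set `I(G_h, G_h')` of left vertices used by the simple switchings of the simple
path with data `f` starting at `A`: the multiedge left vertices together with the auxiliary
left vertices. -/
def IsetS {n : ℕ} (A : Fin n → Fin n → ℕ) (f : Fin n × Fin n → Fin n × Fin n) :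
    Set (Fin n) :=
  {i | ∃ e ∈ MEs A, i = e.1 ∨ i = (f e).1}

/-- Validity of a switching datum `s = ((a,b),(a',b'))`, encoding the simple switching
`⟨a,a',b,b'⟩` on a multigraph `A`. -/
def SwOK {n : ℕ} (A : Fin n → Fin n → ℕ)
    (s : (Fin n × Fin n) × (Fin n × Fin n)) : Prop :=
  s.1.1 ≠ s.2.1 ∧ s.1.2 ≠ s.2.2 ∧ 0 < A s.1.1 s.1.2 ∧ 0 < A s.2.1 s.2.2

/-- Application of a switching datum. -/
def applySw {n : ℕ} (A : Fin n → Fin n → ℕ)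
    (s : (Fin n × Fin n) × (Fin n × Fin n)) : Fin n → Fin n → ℕ :=
  switchM A s.1.1 s.2.1 s.1.2 s.2.2

/-- `I(T) = I(G₁,G₁') ∪ I(G₂,G₂')`. -/
def ITot {n : ℕ} (G₁' G₂' : Fin n → Fin n → ℕ)
    (f₁ f₂ : Fin n × Fin n → Fin n × Fin n) : Set (Fin n) :=
  IsetS G₁' f₁ ∪ IsetS G₂' f₂

/-- An `m`-standard edge `e = (i,j)` with respect to the tuple `T = (G₁,G₁',G₂,G₂')`
with path data `f₁, f₂` and (optional) switching `sw` between `G₁'` and `G₂'`. -/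
def MStandard {n : ℕ} (G₁ G₁' G₂ G₂' : Fin n → Fin n → ℕ)
    (f₁ f₂ : Fin n × Fin n → Fin n × Fin n)
    (sw : Option ((Fin n × Fin n) × (Fin n × Fin n)))
    (e : Fin n × Fin n) : Prop :=
  G₁' e.1 e.2 = 2 ∧ G₂' e.1 e.2 = 2 ∧
  (f₁ e).1 ∉ IsetS G₂' f₂ ∧
  (f₂ e).1 ∉ IsetS G₁' f₁ ∧
  G₁ (f₁ e).1 (f₂ e).2 = 0 ∧ G₂ (f₁ e).1 (f₂ e).2 = 0 ∧
  ∀ s, sw = some s →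
    s.1.1 ∉ ({e.1, (f₁ e).1, (f₂ e).1} : Set (Fin n)) ∧
    s.2.1 ∉ ({e.1, (f₁ e).1, (f₂ e).1} : Set (Fin n))

/-- The set `I_ST(T)` of standard left vertices: left vertices of `m`-standard edges and
the associated auxiliary left vertices. -/
def ISTs {n : ℕ} (G₁ G₁' G₂ G₂' : Fin n → Fin n → ℕ)
    (f₁ f₂ : Fin n × Fin n → Fin n × Fin n)
    (sw : Option ((Fin n × Fin n) × (Fin n × Fin n))) : Set (Fin n) :=
  {i | ∃ e, MStandard G₁ G₁' G₂ G₂' f₁ f₂ sw e ∧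
    (i = e.1 ∨ i = (f₁ e).1 ∨ i = (f₂ e).1)}

/-- The switching between `G₁'` and `G₂'` is of type B: it operates on a left vertex of
`I(T)`. -/
def TypeB {n : ℕ} (G₁' G₂' : Fin n → Fin n → ℕ)
    (f₁ f₂ : Fin n × Fin n → Fin n × Fin n)
    (sw : Option ((Fin n × Fin n) × (Fin n × Fin n))) : Prop :=
  ∃ s, sw = some s ∧
    (s.1.1 ∈ ITot G₁' G₂' f₁ f₂ ∨ s.2.1 ∈ ITot G₁' G₂' f₁ f₂)

/-- The set `Ĩ`: the two left vertices of the switching between `G₁'` and `G₂'` if it is of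
type B, and `∅` otherwise. -/
def ItildeS {n : ℕ} (G₁' G₂' : Fin n → Fin n → ℕ)
    (f₁ f₂ : Fin n × Fin n → Fin n × Fin n)
    (sw : Option ((Fin n × Fin n) × (Fin n × Fin n))) : Set (Fin n) :=
  {i | ∃ s, sw = some s ∧
    (s.1.1 ∈ ITot G₁' G₂' f₁ f₂ ∨ s.2.1 ∈ ITot G₁' G₂' f₁ f₂) ∧
    (i = s.1.1 ∨ i = s.2.1)}

/-- The set `I_NS(T)` of non-standard left vertices:
`I_NS(T) = (I(T) \ I_ST(T)) ∪ Ĩ`. -/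
def INS {n : ℕ} (G₁ G₁' G₂ G₂' : Fin n → Fin n → ℕ)
    (f₁ f₂ : Fin n × Fin n → Fin n × Fin n)
    (sw : Option ((Fin n × Fin n) × (Fin n × Fin n))) : Set (Fin n) :=
  (ITot G₁' G₂' f₁ f₂ \ ISTs G₁ G₁' G₂ G₂' f₁ f₂ sw) ∪ ItildeS G₁' G₂' f₁ f₂ sw

/-- Two left vertices are paired if they are operated on together by one of the relevant
simple switchings (a switching of the simple path from `G₁'` to `G₁`, of the simple path
from `G₂'` to `G₂`, or the switching connecting `G₁'` and `G₂'`). -/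
def SwPairRel {n : ℕ} (G₁' G₂' : Fin n → Fin n → ℕ)
    (f₁ f₂ : Fin n × Fin n → Fin n × Fin n)
    (sw : Option ((Fin n × Fin n) × (Fin n × Fin n)))
    (i i' : Fin n) : Prop :=
  (∃ e ∈ MEs G₁', (i = e.1 ∧ i' = (f₁ e).1) ∨ (i' = e.1 ∧ i = (f₁ e).1)) ∨
  (∃ e ∈ MEs G₂', (i = e.1 ∧ i' = (f₂ e).1) ∨ (i' = e.1 ∧ i = (f₂ e).1)) ∨
  (∃ s, sw = some s ∧ ((i = s.1.1 ∧ i' = s.2.1) ∨ (i = s.2.1 ∧ i' = s.1.1)))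

/-- The pairing relation restricted to the non-standard set `I_NS(T)`. -/
def SwPairNS {n : ℕ} (G₁ G₁' G₂ G₂' : Fin n → Fin n → ℕ)
    (f₁ f₂ : Fin n × Fin n → Fin n × Fin n)
    (sw : Option ((Fin n × Fin n) × (Fin n × Fin n)))
    (i i' : Fin n) : Prop :=
  SwPairRel G₁' G₂' f₁ f₂ sw i i' ∧
    i ∈ INS G₁ G₁' G₂ G₂' f₁ f₂ sw ∧ i' ∈ INS G₁ G₁' G₂ G₂' f₁ f₂ sw

/-- The element of the canonical partition of `I_NS(T)` containing the left vertex `i₀`: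
the connected component of `i₀` under the pairing relation. -/
def BlockOf {n : ℕ} (G₁ G₁' G₂ G₂' : Fin n → Fin n → ℕ)
    (f₁ f₂ : Fin n × Fin n → Fin n × Fin n)
    (sw : Option ((Fin n × Fin n) × (Fin n × Fin n)))
    (i₀ : Fin n) : Set (Fin n) :=
  {x | Relation.EqvGen (SwPairNS G₁ G₁' G₂ G₂' f₁ f₂ sw) i₀ x}

/-- The set `Y` of left vertices employed by the switching connecting `G₁'` and `G₂'`. -/
def Ysw {n : ℕ} (sw : Option ((Fin n × Fin n) × (Fin n × Fin n))) : Set (Fin n) :=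
  {i | ∃ s, sw = some s ∧ (i = s.1.1 ∨ i = s.2.1)}

/-- The number of multiedges of `A` incident to the set `W` of left vertices. -/
noncomputable def MCount {n : ℕ} (A : Fin n → Fin n → ℕ) (W : Set (Fin n)) : ℕ :=
  ({e : Fin n × Fin n | A e.1 e.2 = 2 ∧ e.1 ∈ W} : Set (Fin n × Fin n)).ncard

/-!
Each simple switching involved in `T` (those of the two simple paths and the one between `G₁'`
and `G₂'`) has either both or none of its two left vertices in the block `W`: a non-standard
multiedge puts both left vertices of its switching into `I_NS(T)`, a standard one neither, and
paired vertices of `I_NS(T)` lie in the same block. Such a switching preserves every column sum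
`∑ i ∈ W, A i j`, so `G₁`, `G₁'`, `G₂'` and `G₂` have the same column sums over `W`. The block
contains the left end of a multiedge `(i, j)` of `G₁'` or `G₂'`, so column `j` sums to at least
`2` over `W`; since `G₁` and `G₂` are simple, these sums count the neighbours of `j` in `W`.
-/

section Exchange

variable {n m : ℕ} {ι : Type*}

/-- `B` arises from `A` by performing the simple switchings `⟨l e, l' e, r e, r' e⟩`, `e ∈ E`,
all at once; stated additively, so that no truncated subtraction occurs. -/
def IsSwitchingOf (A B : Fin n → Fin m → ℕ) (E : Finset ι) (l l' : ι → Fin n)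
    (r r' : ι → Fin m) : Prop :=
  ∀ a b, B a b + #{e ∈ E | (a = l e ∧ b = r e) ∨ (a = l' e ∧ b = r' e)} =
    A a b + #{e ∈ E | (a = l e ∧ b = r' e) ∨ (a = l' e ∧ b = r e)}

lemma sum_ite_or_eq_of_ne {α : Type*} [DecidableEq α] (s : Finset α) {x y : α} (hxy : x ≠ y)
    (P Q : Prop) [Decidable P] [Decidable Q] :
    (∑ a ∈ s, if (a = x ∧ P) ∨ (a = y ∧ Q) then (1 : ℕ) else 0) =
      (if x ∈ s ∧ P then 1 else 0) + (if y ∈ s ∧ Q then 1 else 0) := by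
  have hsplit : ∀ a, (if (a = x ∧ P) ∨ (a = y ∧ Q) then (1 : ℕ) else 0) =
      (if a = x ∧ P then 1 else 0) + (if a = y ∧ Q then 1 else 0) := by
    intro a
    by_cases hx : a = x <;> by_cases hy : a = y <;> simp_all
  simp [hsplit, sum_add_distrib, ite_and, sum_ite_eq']

lemma IsSwitchingOf.sum_col_eq {A B : Fin n → Fin m → ℕ} {E : Finset ι} {l l' : ι → Fin n}
    {r r' : ι → Fin m} (hAB : IsSwitchingOf A B E l l' r r') (hl : ∀ e ∈ E, l e ≠ l' e)
    {s : Finset (Fin n)} (hs : ∀ e ∈ E, l e ∈ s ↔ l' e ∈ s) (b : Fin m) :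
    ∑ a ∈ s, B a b = ∑ a ∈ s, A a b := by
  have hcount : ∑ a ∈ s, #{e ∈ E | (a = l e ∧ b = r e) ∨ (a = l' e ∧ b = r' e)} =
      ∑ a ∈ s, #{e ∈ E | (a = l e ∧ b = r' e) ∨ (a = l' e ∧ b = r e)} := by
    simp_rw [card_filter]
    rw [sum_comm, sum_comm (s := s)]
    refine sum_congr rfl fun e he => ?_
    rw [sum_ite_or_eq_of_ne s (hl e he), sum_ite_or_eq_of_ne s (hl e he)]
    by_cases hle : l e ∈ s
    · simp [hle, (hs e he).1 hle, add_comm]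
    · simp [hle, mt (hs e he).2 hle]
  have htotal := sum_congr rfl fun a (_ : a ∈ s) => hAB a b
  rw [sum_add_distrib, sum_add_distrib, hcount] at htotal
  omega

lemma isSwitchingOf_switchM (A : Fin n → Fin m → ℕ) {i i' : Fin n} {j j' : Fin m}
    (hi : i ≠ i') (hj : j ≠ j') (hij : 0 < A i j) (hij' : 0 < A i' j') :
    IsSwitchingOf A (switchM A i i' j j') (univ : Finset Unit) (fun _ => i) (fun _ => i')
      (fun _ => j) (fun _ => j') := by
  intro a b
  simp only [switchM, univ_unique, filter_singleton, apply_ite card, card_singleton,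
    card_empty]
  by_cases ha : a = i <;> by_cases ha' : a = i' <;> by_cases hb : b = j <;>
    by_cases hb' : b = j' <;> simp_all <;> omega

end Exchange

lemma sum_col_applySw_eq {n : ℕ} {A : Fin n → Fin n → ℕ}
    {t : (Fin n × Fin n) × (Fin n × Fin n)} (ht : SwOK A t) {s : Finset (Fin n)}
    (hs : t.1.1 ∈ s ↔ t.2.1 ∈ s) (b : Fin n) :
    ∑ a ∈ s, applySw A t a b = ∑ a ∈ s, A a b :=
  (isSwitchingOf_switchM A ht.1 ht.2.1 ht.2.2.1 ht.2.2.2).sum_col_eq (fun _ _ => ht.1)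
    (fun _ _ => hs) b

lemma two_le_ncard_of_two_le_sum {α β : Type*} {A : α → β → ℕ} {s : Finset α} {j : β}
    (hA : ∀ i, A i j ≤ 1) (h : 2 ≤ ∑ i ∈ s, A i j) :
    2 ≤ {i | i ∈ (s : Set α) ∧ 0 < A i j}.ncard := by
  classical
  have hset : {i | i ∈ (s : Set α) ∧ 0 < A i j} = ↑{i ∈ s | 0 < A i j} := by
    ext
    simp
  rw [hset, Set.ncard_coe_finset]
  calc 2 ≤ ∑ i ∈ s, A i j := h
    _ = ∑ i ∈ s with 0 < A i j, A i j :=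
      (sum_filter_of_ne fun _ _ hi => Nat.pos_of_ne_zero hi).symm
    _ ≤ #{i ∈ s | 0 < A i j} := by
      simpa using sum_le_card_nsmul _ _ 1 fun i _ => hA i

section SimplePath

variable {n d k : ℕ} {A : Fin n → Fin n → ℕ} {f : Fin n × Fin n → Fin n × Fin n}

lemma mem_MEs {e : Fin n × Fin n} : e ∈ MEs A ↔ A e.1 e.2 = 2 := by
  simp [MEs]

lemma SimplePathData.aux_ne_fst (hP : SimplePathData A f) {e e' : Fin n × Fin n}
    (he : e ∈ MEs A) (he' : e' ∈ MEs A) : (f e).1 ≠ e'.1 :=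
  ((hP.1 e he).2.2.2 e' he').1

lemma SimplePathData.eq_of_left_vertex (hC : InCat n d k A) (hP : SimplePathData A f)
    {e e' : Fin n × Fin n} (he : e ∈ MEs A) (he' : e' ∈ MEs A) {x : Fin n}
    (hx : x = e.1 ∨ x = (f e).1) (hx' : x = e'.1 ∨ x = (f e').1) : e = e' := by
  rcases hx with rfl | rfl <;> rcases hx' with h | h
  · exact Prod.ext h (hC.2.2.2.1 _ _ _ (mem_MEs.1 he) (h ▸ mem_MEs.1 he'))
  · exact absurd h.symm (hP.aux_ne_fst he' he)
  · exact absurd h (hP.aux_ne_fst he he')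
  · by_contra hne
    exact (hP.2 e he e' he' hne).1 h

lemma SimplePathData.card_filter_left_vertex_le_one (hC : InCat n d k A)
    (hP : SimplePathData A f) (a : Fin n) (p q : Fin n × Fin n → Prop) [DecidablePred p]
    [DecidablePred q] :
    #{e ∈ MEs A | (a = e.1 ∧ p e) ∨ (a = (f e).1 ∧ q e)} ≤ 1 := by
  refine card_le_one.2 fun e he e' he' => ?_
  rw [mem_filter] at he he'
  exact hP.eq_of_left_vertex hC he.1 he'.1 (he.2.imp And.left And.left)
    (he'.2.imp And.left And.left)

lemma isSwitchingOf_endpointM (hC : InCat n d k A) (hP : SimplePathData A f) :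
    IsSwitchingOf A (endpointM A f) (MEs A) Prod.fst (fun e => (f e).1) Prod.snd
      (fun e => (f e).2) := by
  intro a b
  have hremoved : #{e ∈ MEs A | (a = e.1 ∧ b = e.2) ∨ (a = (f e).1 ∧ b = (f e).2)} ≤ 1 :=
    hP.card_filter_left_vertex_le_one hC a _ _
  have hused : 0 < #{e ∈ MEs A | (a = e.1 ∧ b = e.2) ∨ (a = (f e).1 ∧ b = (f e).2)} →
      0 < A a b := by
    rw [card_pos]
    rintro ⟨e, he⟩
    rw [mem_filter] at he
    rcases he.2 with ⟨rfl, rfl⟩ | ⟨rfl, rfl⟩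
    · simp [mem_MEs.1 he.1]
    · exact (hP.1 e he.1).1
  simp only [endpointM]
  omega

lemma endpointM_le_one (hC : InCat n d k A) (hP : SimplePathData A f) (a b : Fin n) :
    endpointM A f a b ≤ 1 := by
  have hadded : #{e ∈ MEs A | (a = e.1 ∧ b = (f e).2) ∨ (a = (f e).1 ∧ b = e.2)} ≤ 1 :=
    hP.card_filter_left_vertex_le_one hC a _ _
  have hfresh : 0 < #{e ∈ MEs A | (a = e.1 ∧ b = (f e).2) ∨ (a = (f e).1 ∧ b = e.2)} →
      A a b = 0 := by
    rw [card_pos]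
    rintro ⟨e, he⟩
    rw [mem_filter] at he
    rcases he.2 with ⟨rfl, rfl⟩ | ⟨rfl, rfl⟩
    · exact (hP.1 e he.1).2.2.1
    · exact (hP.1 e he.1).2.1
  have hremoved : A a b = 2 →
      0 < #{e ∈ MEs A | (a = e.1 ∧ b = e.2) ∨ (a = (f e).1 ∧ b = (f e).2)} := fun h =>
    card_pos.2 ⟨(a, b), mem_filter.2 ⟨mem_MEs.2 h, Or.inl ⟨rfl, rfl⟩⟩⟩
  have hA2 : A a b ≤ 2 := hC.2.1 a b
  simp only [endpointM]
  omega

lemma sum_col_endpointM_eq (hC : InCat n d k A) (hP : SimplePathData A f) {s : Finset (Fin n)}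
    (hs : ∀ e ∈ MEs A, e.1 ∈ s ↔ (f e).1 ∈ s) (b : Fin n) :
    ∑ a ∈ s, endpointM A f a b = ∑ a ∈ s, A a b :=
  (isSwitchingOf_endpointM hC hP).sum_col_eq (fun _ he => (hP.aux_ne_fst he he).symm) hs b

end SimplePath

namespace Relation.EqvGen

variable {α : Type*} {R : α → α → Prop} {P : α → Prop} {x₀ x y : α}

lemma iff_of_restrict (h : EqvGen (fun a b => R a b ∧ P a ∧ P b) x y) : P x ↔ P y := by
  induction h with
  | rel _ _ h => exact iff_of_true h.2.1 h.2.2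
  | refl => rfl
  | symm _ _ _ ih => exact ih.symm
  | trans _ _ _ _ _ ih₁ ih₂ => exact ih₁.trans ih₂

lemma restrict_iff_of_rel (hx₀ : P x₀) (hR : R x y) (hP : P x ↔ P y) :
    EqvGen (fun a b => R a b ∧ P a ∧ P b) x₀ x ↔ EqvGen (fun a b => R a b ∧ P a ∧ P b) x₀ y := by
  constructor
  · intro h
    have hx := h.iff_of_restrict.1 hx₀
    exact h.trans _ _ _ (rel _ _ ⟨hR, hx, hP.1 hx⟩)
  · intro h
    have hy := h.iff_of_restrict.1 hx₀
    exact h.trans _ _ _ (symm _ _ (rel _ _ ⟨hR, hP.2 hy, hy⟩))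

end Relation.EqvGen

section Block

variable {n d k₁ k₂ : ℕ} {G₁ G₁' G₂ G₂' : Fin n → Fin n → ℕ}
  {f₁ f₂ : Fin n × Fin n → Fin n × Fin n} {sw : Option ((Fin n × Fin n) × (Fin n × Fin n))}
  {i₀ x : Fin n} {e : Fin n × Fin n}

lemma notMem_INS_of_MStandard (hstd : MStandard G₁ G₁' G₂ G₂' f₁ f₂ sw e)
    (hx : x = e.1 ∨ x = (f₁ e).1 ∨ x = (f₂ e).1) : x ∉ INS G₁ G₁' G₂ G₂' f₁ f₂ sw := by
  rintro (⟨-, hnst⟩ | ⟨t, ht, -, hxt⟩)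
  · exact hnst ⟨e, hstd, hx⟩
  · have hsw := hstd.2.2.2.2.2.2 t ht
    rcases hxt with rfl | rfl
    · exact hsw.1 (by simpa using hx)
    · exact hsw.2 (by simpa using hx)

lemma mem_INS_of_not_MStandard₁ (hc₁ : InCat n d k₁ G₁') (hp₁ : SimplePathData G₁' f₁)
    (he : e ∈ MEs G₁') (hns : ¬ MStandard G₁ G₁' G₂ G₂' f₁ f₂ sw e)
    (hx : x = e.1 ∨ x = (f₁ e).1) : x ∈ INS G₁ G₁' G₂ G₂' f₁ f₂ sw := by
  refine Or.inl ⟨Or.inl ⟨e, he, hx⟩, ?_⟩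
  rintro ⟨e', hstd, h | h | h⟩
  · exact hns (hp₁.eq_of_left_vertex hc₁ he (mem_MEs.2 hstd.1) hx (Or.inl h) ▸ hstd)
  · exact hns (hp₁.eq_of_left_vertex hc₁ he (mem_MEs.2 hstd.1) hx (Or.inr h) ▸ hstd)
  · exact hstd.2.2.2.1 ⟨e, he, h ▸ hx⟩

lemma mem_INS_of_not_MStandard₂ (hc₂ : InCat n d k₂ G₂') (hp₂ : SimplePathData G₂' f₂)
    (he : e ∈ MEs G₂') (hns : ¬ MStandard G₁ G₁' G₂ G₂' f₁ f₂ sw e)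
    (hx : x = e.1 ∨ x = (f₂ e).1) : x ∈ INS G₁ G₁' G₂ G₂' f₁ f₂ sw := by
  refine Or.inl ⟨Or.inr ⟨e, he, hx⟩, ?_⟩
  rintro ⟨e', hstd, h | h | h⟩
  · exact hns (hp₂.eq_of_left_vertex hc₂ he (mem_MEs.2 hstd.2.1) hx (Or.inl h) ▸ hstd)
  · exact hstd.2.2.1 ⟨e, he, h ▸ hx⟩
  · exact hns (hp₂.eq_of_left_vertex hc₂ he (mem_MEs.2 hstd.2.1) hx (Or.inr h) ▸ hstd)

lemma mem_INS_iff₁ (hc₁ : InCat n d k₁ G₁') (hp₁ : SimplePathData G₁' f₁)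
    (he : e ∈ MEs G₁') :
    e.1 ∈ INS G₁ G₁' G₂ G₂' f₁ f₂ sw ↔ (f₁ e).1 ∈ INS G₁ G₁' G₂ G₂' f₁ f₂ sw := by
  by_cases hstd : MStandard G₁ G₁' G₂ G₂' f₁ f₂ sw e
  · exact iff_of_false (notMem_INS_of_MStandard hstd (Or.inl rfl))
      (notMem_INS_of_MStandard hstd (Or.inr (Or.inl rfl)))
  · exact iff_of_true (mem_INS_of_not_MStandard₁ hc₁ hp₁ he hstd (Or.inl rfl))
      (mem_INS_of_not_MStandard₁ hc₁ hp₁ he hstd (Or.inr rfl))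

lemma mem_INS_iff₂ (hc₂ : InCat n d k₂ G₂') (hp₂ : SimplePathData G₂' f₂)
    (he : e ∈ MEs G₂') :
    e.1 ∈ INS G₁ G₁' G₂ G₂' f₁ f₂ sw ↔ (f₂ e).1 ∈ INS G₁ G₁' G₂ G₂' f₁ f₂ sw := by
  by_cases hstd : MStandard G₁ G₁' G₂ G₂' f₁ f₂ sw e
  · exact iff_of_false (notMem_INS_of_MStandard hstd (Or.inl rfl))
      (notMem_INS_of_MStandard hstd (Or.inr (Or.inr rfl)))
  · exact iff_of_true (mem_INS_of_not_MStandard₂ hc₂ hp₂ he hstd (Or.inl rfl))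
      (mem_INS_of_not_MStandard₂ hc₂ hp₂ he hstd (Or.inr rfl))

lemma mem_INS_iff_of_eq_some {t : (Fin n × Fin n) × (Fin n × Fin n)} (ht : sw = some t) :
    t.1.1 ∈ INS G₁ G₁' G₂ G₂' f₁ f₂ sw ↔ t.2.1 ∈ INS G₁ G₁' G₂ G₂' f₁ f₂ sw := by
  by_cases hB : t.1.1 ∈ ITot G₁' G₂' f₁ f₂ ∨ t.2.1 ∈ ITot G₁' G₂' f₁ f₂
  · exact iff_of_true (Or.inr ⟨t, ht, hB, Or.inl rfl⟩) (Or.inr ⟨t, ht, hB, Or.inr rfl⟩)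
  · have hnot : ∀ y, y = t.1.1 ∨ y = t.2.1 → y ∉ INS G₁ G₁' G₂ G₂' f₁ f₂ sw := by
      rintro y hy (⟨hy', -⟩ | ⟨t', ht', hB', -⟩)
      · rcases hy with rfl | rfl <;> tauto
      · cases ht.symm.trans ht'
        exact hB hB'
    exact iff_of_false (hnot _ (Or.inl rfl)) (hnot _ (Or.inr rfl))

lemma mem_BlockOf_iff₁ (hc₁ : InCat n d k₁ G₁') (hp₁ : SimplePathData G₁' f₁)
    (hi₀ : i₀ ∈ INS G₁ G₁' G₂ G₂' f₁ f₂ sw) (he : e ∈ MEs G₁') :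
    e.1 ∈ BlockOf G₁ G₁' G₂ G₂' f₁ f₂ sw i₀ ↔ (f₁ e).1 ∈ BlockOf G₁ G₁' G₂ G₂' f₁ f₂ sw i₀ :=
  Relation.EqvGen.restrict_iff_of_rel (R := SwPairRel G₁' G₂' f₁ f₂ sw)
    (P := (· ∈ INS G₁ G₁' G₂ G₂' f₁ f₂ sw)) hi₀ (Or.inl ⟨e, he, Or.inl ⟨rfl, rfl⟩⟩)
    (mem_INS_iff₁ hc₁ hp₁ he)

lemma mem_BlockOf_iff₂ (hc₂ : InCat n d k₂ G₂') (hp₂ : SimplePathData G₂' f₂)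
    (hi₀ : i₀ ∈ INS G₁ G₁' G₂ G₂' f₁ f₂ sw) (he : e ∈ MEs G₂') :
    e.1 ∈ BlockOf G₁ G₁' G₂ G₂' f₁ f₂ sw i₀ ↔ (f₂ e).1 ∈ BlockOf G₁ G₁' G₂ G₂' f₁ f₂ sw i₀ :=
  Relation.EqvGen.restrict_iff_of_rel (R := SwPairRel G₁' G₂' f₁ f₂ sw)
    (P := (· ∈ INS G₁ G₁' G₂ G₂' f₁ f₂ sw)) hi₀ (Or.inr (Or.inl ⟨e, he, Or.inl ⟨rfl, rfl⟩⟩))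
    (mem_INS_iff₂ hc₂ hp₂ he)

lemma mem_BlockOf_iff_of_eq_some (hi₀ : i₀ ∈ INS G₁ G₁' G₂ G₂' f₁ f₂ sw)
    {t : (Fin n × Fin n) × (Fin n × Fin n)} (ht : sw = some t) :
    t.1.1 ∈ BlockOf G₁ G₁' G₂ G₂' f₁ f₂ sw i₀ ↔ t.2.1 ∈ BlockOf G₁ G₁' G₂ G₂' f₁ f₂ sw i₀ :=
  Relation.EqvGen.restrict_iff_of_rel (R := SwPairRel G₁' G₂' f₁ f₂ sw)
    (P := (· ∈ INS G₁ G₁' G₂ G₂' f₁ f₂ sw)) hi₀ (Or.inr (Or.inr ⟨t, ht, Or.inl ⟨rfl, rfl⟩⟩))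
    (mem_INS_iff_of_eq_some ht)

lemma exists_MEs_fst_mem_BlockOf_of_mem_ITot (hc₁ : InCat n d k₁ G₁')
    (hc₂ : InCat n d k₂ G₂') (hp₁ : SimplePathData G₁' f₁) (hp₂ : SimplePathData G₂' f₂)
    (hi₀ : i₀ ∈ INS G₁ G₁' G₂ G₂' f₁ f₂ sw) (hxW : x ∈ BlockOf G₁ G₁' G₂ G₂' f₁ f₂ sw i₀)
    (hx : x ∈ ITot G₁' G₂' f₁ f₂) :
    ∃ e : Fin n × Fin n, e.1 ∈ BlockOf G₁ G₁' G₂ G₂' f₁ f₂ sw i₀ ∧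
      (G₁' e.1 e.2 = 2 ∨ G₂' e.1 e.2 = 2) := by
  rcases hx with ⟨e, he, rfl | rfl⟩ | ⟨e, he, rfl | rfl⟩
  · exact ⟨e, hxW, Or.inl (mem_MEs.1 he)⟩
  · exact ⟨e, (mem_BlockOf_iff₁ hc₁ hp₁ hi₀ he).2 hxW, Or.inl (mem_MEs.1 he)⟩
  · exact ⟨e, hxW, Or.inr (mem_MEs.1 he)⟩
  · exact ⟨e, (mem_BlockOf_iff₂ hc₂ hp₂ hi₀ he).2 hxW, Or.inr (mem_MEs.1 he)⟩

lemma exists_MEs_fst_mem_BlockOf (hc₁ : InCat n d k₁ G₁') (hc₂ : InCat n d k₂ G₂')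
    (hp₁ : SimplePathData G₁' f₁) (hp₂ : SimplePathData G₂' f₂)
    (hi₀ : i₀ ∈ INS G₁ G₁' G₂ G₂' f₁ f₂ sw) :
    ∃ e : Fin n × Fin n, e.1 ∈ BlockOf G₁ G₁' G₂ G₂' f₁ f₂ sw i₀ ∧
      (G₁' e.1 e.2 = 2 ∨ G₂' e.1 e.2 = 2) := by
  have hi₀W : i₀ ∈ BlockOf G₁ G₁' G₂ G₂' f₁ f₂ sw i₀ := Relation.EqvGen.refl i₀
  rcases id hi₀ with ⟨hI, -⟩ | ⟨t, ht, hB, hi₀t⟩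
  · exact exists_MEs_fst_mem_BlockOf_of_mem_ITot hc₁ hc₂ hp₁ hp₂ hi₀ hi₀W hI
  · have hboth : t.1.1 ∈ BlockOf G₁ G₁' G₂ G₂' f₁ f₂ sw i₀ ∧
        t.2.1 ∈ BlockOf G₁ G₁' G₂ G₂' f₁ f₂ sw i₀ := by
      have htW := mem_BlockOf_iff_of_eq_some hi₀ ht
      rcases hi₀t with rfl | rfl
      exacts [⟨hi₀W, htW.1 hi₀W⟩, ⟨htW.2 hi₀W, hi₀W⟩]
    rcases hB with hB | hB
    exacts [exists_MEs_fst_mem_BlockOf_of_mem_ITot hc₁ hc₂ hp₁ hp₂ hi₀ hboth.1 hB,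
      exists_MEs_fst_mem_BlockOf_of_mem_ITot hc₁ hc₂ hp₁ hp₂ hi₀ hboth.2 hB]

end Block

/-- For every element `W` of the canonical partition of `I_NS(T)` of an
admissible tuple `T = (G₁,G₁',G₂,G₂')`, there is a right vertex `j` having at least two
neighbors in `W` in each of the simple graphs `G₁` and `G₂`. -/
theorem stmt16 (n d k₁ k₂ : ℕ)
    (G₁ G₁' G₂ G₂' : Fin n → Fin n → ℕ)
    (f₁ f₂ : Fin n × Fin n → Fin n × Fin n)
    (sw : Option ((Fin n × Fin n) × (Fin n × Fin n)))
    (hc₁ : InCat n d k₁ G₁') (hc₂ : InCat n d k₂ G₂')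
    (hp₁ : SimplePathData G₁' f₁) (he₁ : endpointM G₁' f₁ = G₁)
    (hp₂ : SimplePathData G₂' f₂) (he₂ : endpointM G₂' f₂ = G₂)
    (hsw : match sw with
      | none => G₁' = G₂'
      | some s => SwOK G₁' s ∧ G₂' = applySw G₁' s)
    (i₀ : Fin n) (hi₀ : i₀ ∈ INS G₁ G₁' G₂ G₂' f₁ f₂ sw)
    (W : Set (Fin n)) (hW : W = BlockOf G₁ G₁' G₂ G₂' f₁ f₂ sw i₀) :
    ∃ j : Fin n,
      2 ≤ ({i | i ∈ W ∧ 0 < G₁ i j} : Set (Fin n)).ncard ∧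
      2 ≤ ({i | i ∈ W ∧ 0 < G₂ i j} : Set (Fin n)).ncard := by
  obtain ⟨s, rfl⟩ := (Set.toFinite W).exists_finset_coe
  have hmem : ∀ x, x ∈ s ↔ x ∈ BlockOf G₁ G₁' G₂ G₂' f₁ f₂ sw i₀ := by simp [← hW]
  have hsum₁ : ∀ b, ∑ a ∈ s, G₁ a b = ∑ a ∈ s, G₁' a b := he₁ ▸
    sum_col_endpointM_eq hc₁ hp₁ fun e he => by
      simpa only [hmem] using mem_BlockOf_iff₁ hc₁ hp₁ hi₀ he
  have hsum₂ : ∀ b, ∑ a ∈ s, G₂ a b = ∑ a ∈ s, G₂' a b := he₂ ▸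
    sum_col_endpointM_eq hc₂ hp₂ fun e he => by
      simpa only [hmem] using mem_BlockOf_iff₂ hc₂ hp₂ hi₀ he
  have hsum' : ∀ b, ∑ a ∈ s, G₁' a b = ∑ a ∈ s, G₂' a b := by
    cases sw with
    | none => exact fun _ => hsw ▸ rfl
    | some t =>
      have hts : t.1.1 ∈ s ↔ t.2.1 ∈ s := by
        simpa only [hmem] using mem_BlockOf_iff_of_eq_some hi₀ rfl
      exact fun b => hsw.2 ▸ (sum_col_applySw_eq hsw.1 hts b).symm
  obtain ⟨e, heW, he2⟩ := exists_MEs_fst_mem_BlockOf hc₁ hc₂ hp₁ hp₂ hi₀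
  have hle : ∀ A : Fin n → Fin n → ℕ, A e.1 e.2 ≤ ∑ a ∈ s, A a e.2 := fun A =>
    single_le_sum (f := (A · e.2)) (fun _ _ => Nat.zero_le _) ((hmem _).2 heW)
  have htwo : 2 ≤ ∑ a ∈ s, G₁' a e.2 := by
    rcases he2 with h | h
    · exact h ▸ hle G₁'
    · exact hsum' e.2 ▸ h ▸ hle G₂'
  refine ⟨e.2, two_le_ncard_of_two_le_sum ?_ ?_, two_le_ncard_of_two_le_sum ?_ ?_⟩
  · exact fun i => he₁ ▸ endpointM_le_one hc₁ hp₁ i e.2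
  · exact hsum₁ e.2 ▸ htwo
  · exact fun i => he₂ ▸ endpointM_le_one hc₂ hp₂ i e.2
  · exact hsum₂ e.2 ▸ hsum' e.2 ▸ htwo
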